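/- Let T = MvPolynomial (Fin 3) (ZMod 2) be the polynomial ring ℤ/2[a', c', t], and let φ : S → T be the (ZMod 2)-algebra homomorphism determined by φ(a) = a', φ(b) = t·a', φ(c) = c', φ(d) = t·c'. Then the kernel of φ equals the ideal of S generated by a·d + c·b. (In particular φ induces an injective ring homomorphism from S⧸(a·d + c·b) into T.) -/

import Mathlib

/-!
Modulo `a * d + c * b` we have `a * d ≡ b * c`, so for every `p` some `a ^ n * p` is congruent
to a polynomial `q` in `a, b, c` alone. On `ℤ/2[a, b, c]` the map `φ` is injective: it sends
`a, b, c` to the monomials `a', t * a', c'`, whose exponent vectors are linearly independent, so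
distinct monomials go to distinct monomials. Hence if `φ p = 0` then `q = 0`, i.e.
`a * d + c * b ∣ a ^ n * p`, and since the prime `a` does not divide `a * d + c * b`, in fact
`a * d + c * b ∣ p`.
-/

open MvPolynomial

/-- `S = ℤ/2[a,b,c,d] ≅ H^*(BSO(3)²; ℤ/2)` with `a = w₂'`, `b = w₃'`, `c = w₂''`, `d = w₃''`. -/
noncomputable abbrev S : Type := MvPolynomial (Fin 4) (ZMod 2)

noncomputable def a : S := X 0
noncomputable def b : S := X 1
noncomputable def c : S := X 2
noncomputable def d : S := X 3

/-- `T = ℤ/2[a', c', t]`. -/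
noncomputable abbrev T : Type := MvPolynomial (Fin 3) (ZMod 2)

/-- The algebra map `φ : S → T` with `φ(a) = a'`, `φ(b) = t·a'`, `φ(c) = c'`, `φ(d) = t·c'`. -/
noncomputable def φ : S →ₐ[ZMod 2] T :=
  MvPolynomial.aeval ![X 0, X 2 * X 0, X 1, X 2 * X 1]

theorem MvPolynomial.aeval_monomial_injective {σ τ R : Type*} [CommSemiring R]
    {v : σ → τ →₀ ℕ} (hv : LinearIndependent ℕ v) :
    Function.Injective (aeval (fun i => monomial (v i) (1 : R)) :
      MvPolynomial σ R →ₐ[R] MvPolynomial τ R) := by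
  have : aeval (fun i => monomial (v i) (1 : R)) =
      AddMonoidAlgebra.mapDomainAlgHom R R (Finsupp.linearCombination ℕ v).toAddMonoidHom := by
    refine MvPolynomial.algHom_ext fun i => ?_
    rw [aeval_X, AddMonoidAlgebra.mapDomainAlgHom_apply]
    simp [X, monomial]
  rw [this]
  exact AddMonoidAlgebra.mapDomain_injective hv

/-- The exponent vectors of `φ a = a'`, `φ b = a' * t`, `φ c = c'` in `T = ℤ/2[a', c', t]`. -/
noncomputable def abcExponents : Fin 3 → Fin 3 →₀ ℕ :=
  ![Finsupp.single 0 1, Finsupp.single 0 1 + Finsupp.single 2 1, Finsupp.single 1 1]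

theorem linearIndependent_abcExponents : LinearIndependent ℕ abcExponents := by
  intro m m' h
  have hcoord := fun j => DFunLike.congr_fun h j
  simp [Finsupp.linearCombination_apply, Finsupp.sum_fintype, Fin.sum_univ_three,
    Finsupp.single_apply, abcExponents] at hcoord
  have h0 := hcoord 0
  have h1 := hcoord 1
  have h2 := hcoord 2
  simp at h0 h1 h2
  ext j
  fin_cases j <;> simp <;> omega

theorem φ_comp_rename_castSucc :
    φ.comp (rename Fin.castSucc) = aeval fun i => monomial (abcExponents i) (1 : ZMod 2) := by
  refine MvPolynomial.algHom_ext fun i => ?_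
  fin_cases i <;>
    simp [φ, abcExponents, monomial_add_single, ← X_pow_eq_monomial, mul_comm]

theorem φ_rename_castSucc_injective :
    Function.Injective fun q => φ (rename Fin.castSucc q) := by
  have := aeval_monomial_injective (R := ZMod 2) linearIndependent_abcExponents
  rwa [← φ_comp_rename_castSucc] at this

theorem φ_ad_add_cb : φ (a * d + c * b) = 0 := by
  rw [map_add, show φ (c * b) = φ (a * d) by simp [φ, a, b, c, d]; ring]
  exact CharTwo.add_self_eq_zero _

theorem prime_a : Prime a := X_prime

theorem not_a_dvd_ad_add_cb : ¬ a ∣ a * d + c * b := by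
  intro h
  have hcb : a ∣ c * b := (dvd_add_right (dvd_mul_right a d)).mp h
  rcases prime_a.dvd_or_dvd hcb with h | h <;> simp [a, b, c, X_dvd_X] at h

theorem exists_dvd_a_pow_mul_sub_rename_castSucc (p : S) :
    ∃ (n : ℕ) (q : MvPolynomial (Fin 3) (ZMod 2)),
      a * d + c * b ∣ a ^ n * p - rename Fin.castSucc q := by
  induction p using MvPolynomial.induction_on with
  | C r => exact ⟨0, C r, by simp⟩
  | add p₁ p₂ hp₁ hp₂ =>
    obtain ⟨m, q₁, h₁⟩ := hp₁
    obtain ⟨n, q₂, h₂⟩ := hp₂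
    refine ⟨m + n, X 0 ^ n * q₁ + X 0 ^ m * q₂, ?_⟩
    have : a ^ (m + n) * (p₁ + p₂) - rename Fin.castSucc (X 0 ^ n * q₁ + X 0 ^ m * q₂) =
        a ^ n * (a ^ m * p₁ - rename Fin.castSucc q₁) +
          a ^ m * (a ^ n * p₂ - rename Fin.castSucc q₂) := by
      simp only [map_add, map_mul, map_pow, rename_X, Fin.castSucc_zero, a]
      ring
    rw [this]
    exact dvd_add (h₁.mul_left _) (h₂.mul_left _)
  | mul_X p i hp =>
    obtain ⟨n, q, k, hk⟩ := hp
    induction i using Fin.lastCases with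
    | last =>
      -- in characteristic 2, `a ^ (n + 1) * (p * d) ≡ a ^ n * p * (b * c) ≡ q * b * c`
      refine ⟨n + 1, q * X 1 * X 2, k * a * d + rename Fin.castSucc q, ?_⟩
      have h2 : (2 : S) = 0 := CharTwo.two_eq_zero
      simp only [map_mul, rename_X, a, b, c, d] at hk ⊢
      simp only [Fin.castSucc_one, show Fin.last 3 = 3 from rfl,
        show Fin.castSucc (2 : Fin 3) = 2 from rfl]
      linear_combination (X 0 * X 3) * hk - (rename Fin.castSucc q * X 1 * X 2) * h2
    | cast j =>
      refine ⟨n, q * X j, ?_⟩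
      rw [map_mul, rename_X, ← mul_assoc, ← sub_mul]
      exact dvd_mul_of_dvd_left ⟨k, hk⟩ _

theorem stmt_6 : RingHom.ker (φ : S →+* T) = Ideal.span {a * d + c * b} := by
  refine le_antisymm (fun p hp => ?_) ((Ideal.span_singleton_le_iff_mem _).mpr φ_ad_add_cb)
  obtain ⟨n, q, k, hk⟩ := exists_dvd_a_pow_mul_sub_rename_castSucc p
  have hq : q = 0 := φ_rename_castSucc_injective <| by
    have hp : φ p = 0 := hp
    simpa [hp, φ_ad_add_cb] using congrArg φ hk
  rw [hq, map_zero, sub_zero] at hk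
  have hcoprime : IsRelPrime (a * d + c * b) (a ^ n) :=
    (prime_a.irreducible.isRelPrime_iff_not_dvd.mpr not_a_dvd_ad_add_cb).pow_left.symm
  exact Ideal.mem_span_singleton.mpr (hcoprime.dvd_of_dvd_mul_left ⟨k, hk⟩)
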